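/- arXiv:2402.05682 — 3 statements merged into one kernel-verified Lean document; each statement's English description precedes it below -/
import Mathlib

section
/- The standard n-path ω_n = Σ_{α ∈ E_n} (-1)^{σ(α)} e_α belongs to Ω_n(I^{⊡n};ℤ); that is, its boundary ∂ω_n is again a ℤ-linear combination of strongly regular allowed elementary (n-1)-paths in I^{⊡n}. -/
/-- The boundary operator on the free ℤ-module generated by elementary paths (encoded as lists
of vertices): `∂ e_{i₀…i_n} = Σ_j (-1)^j e_{i₀…î_j…i_n}` for paths of length ≥ 1, and `∂ = 0`
on paths of length 0. -/
noncomputable def bdry (V : Type*) : (List V →₀ ℤ) →ₗ[ℤ] (List V →₀ ℤ) :=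
  Finsupp.lsum ℤ fun l => LinearMap.toSpanSingleton ℤ _
    (if 2 ≤ l.length then
      ∑ j ∈ Finset.range l.length, (-1 : ℤ) ^ j • Finsupp.single (l.eraseIdx j) (1 : ℤ)
    else 0)

/-- `u` is a ℤ-linear combination of strongly regular allowed elementary `n`-paths in the
digraph with adjacency `adj` (allowed: consecutive vertices joined by an edge; strongly
regular: all vertices pairwise distinct), i.e. `u ∈ A_n(G;ℤ)`. -/
def IsA {V : Type*} (adj : V → V → Prop) (n : ℕ) (u : List V →₀ ℤ) : Prop :=
  ∀ l ∈ u.support, l.length = n + 1 ∧ l.Chain' adj ∧ l.Nodup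

/-- `u ∈ Ω_n(G;ℤ)`: `u ∈ A_n(G;ℤ)` and `∂u ∈ A_{n-1}(G;ℤ)`. -/
def IsOmega {V : Type*} (adj : V → V → Prop) (n : ℕ) (u : List V →₀ ℤ) : Prop :=
  IsA adj n u ∧ IsA adj (n - 1) (bdry V u)
/-- The adjacency relation of the `n`-cube digraph `I^{⊡n}`: vertices are binary strings of
length `n`, with an edge `a → b` iff `b` is obtained from `a` by changing exactly one
coordinate from `0` (false) to `1` (true). -/
def cubeAdj {n : ℕ} (a b : Fin n → Bool) : Prop :=
  ∃ i, a i = false ∧ b i = true ∧ ∀ j, j ≠ i → a j = b j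

/-- The standard `n`-path `ω_n = Σ_{α ∈ E_n} (-1)^{σ(α)} e_α` in the `n`-cube `I^{⊡n}`:
allowed `n`-paths from `(0,…,0)` to `(1,…,1)` correspond to permutations `π` of the `n`
coordinates (flipping coordinate `π(k)` at step `k+1`), and the sign `(-1)^{σ(α)}` given by
the number of inversions is the sign of `π`. -/
noncomputable def stdOmega (n : ℕ) : List (Fin n → Bool) →₀ ℤ :=
  ∑ π : Equiv.Perm (Fin n),
    ((Equiv.Perm.sign π : ℤˣ) : ℤ) •
      Finsupp.single
        ((List.range (n + 1)).map fun k => fun i : Fin n => decide ((π⁻¹ i : Fin n).val < k))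
        (1 : ℤ)

/-! The boundary of `ω_n` is `Σ_j (-1)^j F_j`, where `F_j` collects, with the signs of `ω_n`, the
paths with their `j`-th vertex deleted. For `0 < j < n` deleting the `j`-th vertex from the path of
`π` or from that of `π * (j-1 j)` gives the same path, with opposite signs, so `F_j = 0`. The two
remaining faces drop an end vertex of an allowed, strongly regular path, and stay so. -/

open Equiv Finsupp

theorem sum_sign_smul_eq_zero_of_mul_swap {α M : Type*} [DecidableEq α] [Fintype α]
    [AddCommGroup M] {a b : α} (hab : a ≠ b) (f : Perm α → M)
    (hf : ∀ σ, f (σ * swap a b) = f σ) :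
    ∑ σ : Perm α, ((Perm.sign σ : ℤˣ) : ℤ) • f σ = 0 :=
  Finset.sum_ninvolution (· * swap a b)
    (fun σ => by simp [hf, Perm.sign_mul, Perm.sign_swap hab])
    (fun σ _ => (not_congr mul_swap_eq_iff).mpr hab) (fun _ => Finset.mem_univ _)
    (mul_swap_involutive a b)

section Boundary

variable {V ι : Type*}

theorem bdry_single (l : List V) :
    bdry V (single l 1) =
      if 2 ≤ l.length then
        ∑ j ∈ Finset.range l.length, (-1 : ℤ) ^ j • single (l.eraseIdx j) (1 : ℤ)
      else 0 := by
  simp [bdry, LinearMap.toSpanSingleton_apply]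

theorem bdry_sum_smul_single (s : Finset ι) (c : ι → ℤ) (f : ι → List V) {m : ℕ}
    (hm : 2 ≤ m) (hf : ∀ i ∈ s, (f i).length = m) :
    bdry V (∑ i ∈ s, c i • single (f i) 1) =
      ∑ j ∈ Finset.range m, (-1 : ℤ) ^ j • ∑ i ∈ s, c i • single ((f i).eraseIdx j) 1 := by
  simp only [map_sum, map_zsmul]
  rw [Finset.sum_congr rfl fun i hi => by rw [bdry_single, hf i hi, if_pos hm]]
  simp only [Finset.smul_sum]
  rw [Finset.sum_comm]
  exact Finset.sum_congr rfl fun j _ => Finset.sum_congr rfl fun i _ => smul_comm _ _ _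

theorem exists_eq_of_mem_support_sum_smul_single {s : Finset ι} {c : ι → ℤ} {f : ι → List V}
    {l : List V} (hl : l ∈ (∑ i ∈ s, c i • single (f i) (1 : ℤ)).support) :
    ∃ i ∈ s, f i = l := by
  classical
  obtain ⟨i, hi, hl⟩ := Finset.mem_biUnion.1 (support_finsetSum hl)
  exact ⟨i, hi, (Finset.mem_singleton.1 (support_single_subset (support_smul hl))).symm⟩

end Boundary

section IsA

variable {V ι : Type*} {adj : V → V → Prop} {n : ℕ}

theorem isA_sum_smul_single {s : Finset ι} (c : ι → ℤ) {f : ι → List V}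
    (hf : ∀ i ∈ s, (f i).length = n + 1 ∧ (f i).IsChain adj ∧ (f i).Nodup) :
    IsA adj n (∑ i ∈ s, c i • single (f i) 1) := by
  intro l hl
  obtain ⟨i, hi, rfl⟩ := exists_eq_of_mem_support_sum_smul_single hl
  exact hf i hi

theorem IsA.add {u v : List V →₀ ℤ} (hu : IsA adj n u) (hv : IsA adj n v) :
    IsA adj n (u + v) := by
  classical
  exact fun l hl => (Finset.mem_union.1 (support_add hl)).elim (hu l) (hv l)

theorem IsA.smul {u : List V →₀ ℤ} (hu : IsA adj n u) (c : ℤ) : IsA adj n (c • u) :=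
  fun l hl => hu l (support_smul hl)

end IsA

namespace StdOmega

variable {n : ℕ}

def vertex (π : Perm (Fin n)) (k : ℕ) : Fin n → Bool :=
  fun i => decide ((π⁻¹ i : Fin n).val < k)

def path (π : Perm (Fin n)) : List (Fin n → Bool) :=
  (List.range (n + 1)).map (vertex π)

noncomputable def face (n j : ℕ) : List (Fin n → Bool) →₀ ℤ :=
  ∑ π : Perm (Fin n), ((Perm.sign π : ℤˣ) : ℤ) • single ((path π).eraseIdx j) 1

theorem stdOmega_eq_sum_path (n : ℕ) :
    stdOmega n = ∑ π : Perm (Fin n), ((Perm.sign π : ℤˣ) : ℤ) • single (path π) 1 :=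
  rfl

@[simp]
theorem length_path (π : Perm (Fin n)) : (path π).length = n + 1 := by
  simp [path]

@[simp]
theorem getElem_path (π : Perm (Fin n)) (k : ℕ) (h : k < (path π).length) :
    (path π)[k] = vertex π k := by
  simp [path]

theorem cubeAdj_vertex_succ (π : Perm (Fin n)) {k : ℕ} (hk : k < n) :
    cubeAdj (vertex π k) (vertex π (k + 1)) := by
  refine ⟨π ⟨k, hk⟩, by simp [vertex], by simp [vertex], fun i hi => ?_⟩
  have : (π⁻¹ i : Fin n).val ≠ k := fun h => hi (by rw [← Fin.eq_mk_iff_val_eq.2 h]; simp)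
  simp only [vertex, decide_eq_decide]
  omega

theorem injOn_vertex (π : Perm (Fin n)) : Set.InjOn (vertex π) (Set.Iic n) := by
  intro k hk k' hk' h
  by_contra hne
  wlog hlt : k < k' generalizing k k'
  · exact this hk' hk h.symm (Ne.symm hne) (by omega)
  simp only [Set.mem_Iic] at hk'
  have := congrFun h (π ⟨k, by omega⟩)
  simp [vertex] at this
  omega

theorem path_nodup (π : Perm (Fin n)) : (path π).Nodup :=
  List.nodup_range.map_on fun _ hx _ hy => injOn_vertex π
    (Nat.lt_succ_iff.1 (List.mem_range.1 hx)) (Nat.lt_succ_iff.1 (List.mem_range.1 hy))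

theorem path_chain (π : Perm (Fin n)) : (path π).IsChain cubeAdj := by
  refine List.isChain_iff_getElem.2 fun k hk => ?_
  simp only [getElem_path]
  exact cubeAdj_vertex_succ π (by simpa using hk)

theorem vertex_mul_swap (π : Perm (Fin n)) {i : ℕ} (hi : i + 1 < n) {k : ℕ} (hk : k ≠ i + 1) :
    vertex (π * swap ⟨i, by omega⟩ ⟨i + 1, hi⟩) k = vertex π k := by
  funext x
  simp only [vertex, mul_inv_rev, swap_inv, Perm.mul_apply, decide_eq_decide]
  rcases eq_or_ne (π⁻¹ x) ⟨i, by omega⟩ with hx | hx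
  · rw [hx, swap_apply_left]; simp only; omega
  rcases eq_or_ne (π⁻¹ x) ⟨i + 1, hi⟩ with hx' | hx'
  · rw [hx', swap_apply_right]; simp only; omega
  · rw [swap_apply_of_ne_of_ne hx hx']

theorem eraseIdx_path_mul_swap (π : Perm (Fin n)) {i : ℕ} (hi : i + 1 < n) :
    (path (π * swap ⟨i, by omega⟩ ⟨i + 1, hi⟩)).eraseIdx (i + 1) = (path π).eraseIdx (i + 1) := by
  simp only [path, List.eraseIdx_map]
  refine List.map_congr_left fun k hk => vertex_mul_swap π hi ?_
  obtain ⟨j, hj, hji, rfl⟩ := List.mem_eraseIdx_iff_getElem.1 hk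
  simpa using hji

theorem face_eq_zero {i : ℕ} (hi : i + 1 < n) : face n (i + 1) = 0 :=
  sum_sign_smul_eq_zero_of_mul_swap (a := ⟨i, by omega⟩) (b := ⟨i + 1, hi⟩)
    (by simp [Fin.ext_iff]) _
    fun π => by rw [eraseIdx_path_mul_swap π hi]

theorem bdry_stdOmega (n : ℕ) :
    bdry _ (stdOmega (n + 1)) = face (n + 1) 0 + (-1 : ℤ) ^ (n + 1) • face (n + 1) (n + 1) := by
  rw [stdOmega_eq_sum_path, bdry_sum_smul_single _ _ _ (m := n + 2) (by omega)
    fun π _ => length_path π, Finset.sum_range_succ, Finset.sum_range_succ',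
    Finset.sum_eq_zero fun i hi => by rw [← face, face_eq_zero (by simpa using hi), smul_zero]]
  simp [face]

theorem isA_face_zero (n : ℕ) : IsA cubeAdj n (face (n + 1) 0) :=
  isA_sum_smul_single _ fun π _ => by
    rw [List.eraseIdx_zero]
    exact ⟨by simp, (path_chain π).tail, (path_nodup π).sublist (List.tail_sublist _)⟩

theorem isA_face_last (n : ℕ) : IsA cubeAdj n (face (n + 1) (n + 1)) :=
  isA_sum_smul_single _ fun π _ => by
    rw [List.eraseIdx_eq_dropLast (by simp)]
    exact ⟨by simp, (path_chain π).dropLast, (path_nodup π).sublist (List.dropLast_sublist _)⟩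

end StdOmega

open StdOmega

/-- `ω_n ∈ Ω_n(I^{⊡n};ℤ)`: the standard `n`-path is a combination of strongly regular allowed
elementary `n`-paths, and its boundary `∂ω_n` is again a ℤ-linear combination of strongly
regular allowed elementary `(n-1)`-paths in `I^{⊡n}`. -/
theorem stdOmega_mem_omega (n : ℕ) :
    IsA cubeAdj n (stdOmega n) ∧ IsA cubeAdj (n - 1) (bdry (Fin n → Bool) (stdOmega n)) := by
  refine ⟨isA_sum_smul_single _ fun π _ => ⟨length_path π, path_chain π, path_nodup π⟩, ?_⟩
  cases n with
  | zero => simp [stdOmega_eq_sum_path, bdry_single, IsA]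
  | succ n =>
    rw [bdry_stdOmega]
    exact IsA.add (isA_face_zero n) (IsA.smul (isA_face_last n) _)
end

section
/- If H is an acyclic digraph and f: G → H is a digraph map, then the induced linear map f_* (sending e_{i_0…i_k} to e_{f(i_0)…f(i_k)} when all f(i_j) are distinct and to 0 otherwise) restricts to a chain map f_*: Ω_*(G;ℤ) → Ω_*(H;ℤ), i.e. ∂ f_* = f_* ∂ on Ω_*(G;ℤ). -/
/-- `f` is a digraph map: every edge `v → w` satisfies `f v → f w` or `f v = f w`. -/
def IsDigraphMap {V W : Type*} (adjV : V → V → Prop) (adjW : W → W → Prop)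
    (f : V → W) : Prop :=
  ∀ a b, adjV a b → adjW (f a) (f b) ∨ f a = f b

/-- A digraph is acyclic if it contains no directed cycle `v₀ → v₁ → ⋯ → v_n → v₀`. -/
def Acyclic {V : Type*} (adj : V → V → Prop) : Prop :=
  ¬ ∃ (n : ℕ) (v : Fin (n + 1) → V),
      (∀ i : Fin n, adj (v i.castSucc) (v i.succ)) ∧ adj (v (Fin.last n)) (v 0)

open Classical

/-- The push-forward `f_*`: the ℤ-linear map sending an elementary path `e_{i₀…i_k}` to
`e_{f(i₀)…f(i_k)}` when all the `f(i_j)` are pairwise distinct, and to `0` otherwise. -/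
noncomputable def fstar {V W : Type*} (f : V → W) : (List V →₀ ℤ) →ₗ[ℤ] (List W →₀ ℤ) :=
  Finsupp.lsum ℤ fun l => LinearMap.toSpanSingleton ℤ _
    (if (l.map f).Nodup then Finsupp.single (l.map f) (1 : ℤ) else 0)

/-! If `l` is an allowed path of `G`, then `f(l)` is a chain for the reflexive closure of the
edge relation of `H`. When the vertices of `f(l)` are distinct, so are those of each of its faces,
and `∂ f_* e_l = f_* ∂ e_l` term by term. Otherwise acyclicity of `H` forces two *consecutive*
equal vertices, `f(l) = L a a R`: both sides then vanish, since every face of `f(l)` other than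
the two deleting one of the copies of `a` still repeats `a`, and those two faces coincide and
carry opposite signs. -/

open Finsupp Finset

namespace List

variable {α : Type*} {r : α → α → Prop}

theorem IsChain.isChain_or_exists_eq_append_cons_cons :
    ∀ {m : List α}, m.IsChain (fun a b => r a b ∨ a = b) →
      m.IsChain r ∨ ∃ L a R, m = L ++ a :: a :: R
  | [], _ => .inl .nil
  | [_], _ => .inl (.singleton _)
  | a :: b :: m, hm => by
    obtain ⟨hab | rfl, hm⟩ := isChain_cons_cons.mp hm
    · obtain hm | ⟨L, c, R, hL⟩ := hm.isChain_or_exists_eq_append_cons_cons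
      · exact .inl (isChain_cons_cons.mpr ⟨hab, hm⟩)
      · exact .inr ⟨a :: L, c, R, by simp [hL]⟩
    · exact .inr ⟨[], a, m, rfl⟩

theorem not_nodup_append_cons_cons (L R : List α) (a : α) : ¬ (L ++ a :: a :: R).Nodup := by
  simp [nodup_append]

theorem IsChain.of_or_eq_of_nodup {m : List α} (hm : m.IsChain (fun a b => r a b ∨ a = b))
    (hnd : m.Nodup) : m.IsChain r := by
  obtain hm | ⟨L, a, R, rfl⟩ := hm.isChain_or_exists_eq_append_cons_cons
  · exact hm
  · exact absurd hnd (not_nodup_append_cons_cons L R a)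

theorem exists_eraseIdx_eq_append_cons_cons (L R : List α) (a : α) {j : ℕ}
    (hj : j ≠ L.length) (hj' : j ≠ L.length + 1) :
    ∃ L' R', (L ++ a :: a :: R).eraseIdx j = L' ++ a :: a :: R' := by
  rcases lt_or_gt_of_ne hj with hlt | hgt
  · exact ⟨L.eraseIdx j, R, eraseIdx_append_of_lt_length hlt _⟩
  · refine ⟨L, R.eraseIdx (j - L.length - 2), ?_⟩
    rw [eraseIdx_append_of_length_le hgt.le, show j - L.length = j - L.length - 2 + 2 by omega]
    rfl

end List

theorem Acyclic.nodup_of_isChain {W : Type*} {adj : W → W → Prop} (h : Acyclic adj)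
    {m : List W} (hm : m.IsChain adj) : m.Nodup := by
  rw [List.isChain_iff_getElem] at hm
  refine List.pairwise_iff_getElem.mpr fun i j hi hj hij heq => h ?_
  -- `m[i] = m[j]` closes the directed cycle `m[i] → m[i+1] → ⋯ → m[j-1] → m[i]`
  refine ⟨j - i - 1, fun k => m[i + k], fun k => ?_, ?_⟩
  · simpa [add_assoc] using hm (i + k) (by omega)
  · have hj : j - 1 + 1 = j := by omega
    simpa [show i + (j - i - 1) = j - 1 by omega, hj, ← heq] using hm (j - 1) (by omega)

noncomputable def nodupSingle {W : Type*} (m : List W) : List W →₀ ℤ :=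
  if m.Nodup then single m 1 else 0

theorem sum_range_nodupSingle_eraseIdx_append_cons_cons {W : Type*} (L R : List W) (a : W) :
    ∑ j ∈ range (L ++ a :: a :: R).length,
      (-1 : ℤ) ^ j • nodupSingle ((L ++ a :: a :: R).eraseIdx j) = 0 := by
  have hlen : L.length + 1 < (L ++ a :: a :: R).length := by simp
  rw [Finset.sum_eq_add_of_mem L.length (L.length + 1) (mem_range.mpr (by omega))
    (mem_range.mpr hlen) (by omega) fun j _ hj => ?_]
  · have h₀ : (L ++ a :: a :: R).eraseIdx L.length = L ++ a :: R := by
      simp [List.eraseIdx_append_of_length_le]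
    have h₁ : (L ++ a :: a :: R).eraseIdx (L.length + 1) = L ++ a :: R := by
      simp [List.eraseIdx_append_of_length_le]
    rw [h₀, h₁, pow_succ]
    module
  · obtain ⟨L', R', h⟩ := List.exists_eraseIdx_eq_append_cons_cons L R a hj.1 hj.2
    rw [h, nodupSingle, if_neg (List.not_nodup_append_cons_cons L' R' a), smul_zero]

section PathComplex

variable {V W : Type*}

theorem fstar_single_one (f : V → W) (l : List V) :
    fstar f (single l 1) = nodupSingle (l.map f) := by
  simp [fstar, nodupSingle]

theorem bdry_single_one (l : List V) :
    bdry V (single l 1) = if 2 ≤ l.length then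
      ∑ j ∈ range l.length, (-1 : ℤ) ^ j • single (l.eraseIdx j) (1 : ℤ) else 0 := by
  simp [bdry]

theorem fstar_bdry_single_one (f : V → W) (l : List V) :
    fstar f (bdry V (single l 1)) = if 2 ≤ l.length then
      ∑ j ∈ range (l.map f).length, (-1 : ℤ) ^ j • nodupSingle ((l.map f).eraseIdx j) else 0 := by
  rw [bdry_single_one]
  split_ifs
  · simp only [map_sum, map_smul, fstar_single_one, List.eraseIdx_map, List.length_map]
  · exact map_zero _

theorem mem_support_fstar {f : V → W} {u : List V →₀ ℤ} {m : List W}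
    (hm : m ∈ (fstar f u).support) : ∃ l ∈ u.support, l.map f = m ∧ m.Nodup := by
  rw [← u.sum_single, map_finsuppSum] at hm
  obtain ⟨l, hl, hm⟩ := mem_biUnion.mp (support_sum hm)
  rw [← smul_single_one, map_smul, fstar_single_one, nodupSingle] at hm
  split_ifs at hm with hnd
  · obtain rfl := mem_singleton.mp (support_single_subset (support_smul hm))
    exact ⟨l, hl, rfl, hnd⟩
  · simp at hm

variable {adjV : V → V → Prop} {adjW : W → W → Prop} {f : V → W}

theorem IsDigraphMap.isChain_map (hf : IsDigraphMap adjV adjW f) {l : List V}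
    (hl : l.IsChain adjV) : (l.map f).IsChain (fun a b => adjW a b ∨ a = b) :=
  (List.isChain_map f).mpr (hl.imp hf)

theorem bdry_fstar_single_one (hW : Acyclic adjW) (hf : IsDigraphMap adjV adjW f) {l : List V}
    (hl : l.IsChain adjV) : bdry W (fstar f (single l 1)) = fstar f (bdry V (single l 1)) := by
  rw [fstar_single_one, fstar_bdry_single_one, nodupSingle]
  split_ifs with hnd hlen
  · rw [bdry_single_one, List.length_map, if_pos hlen]
    refine sum_congr rfl fun j _ => ?_
    rw [nodupSingle, if_pos (hnd.sublist (List.eraseIdx_sublist _ j))]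
  · rw [bdry_single_one, List.length_map, if_neg hlen]
  · obtain hch | ⟨L, a, R, hLR⟩ := (hf.isChain_map hl).isChain_or_exists_eq_append_cons_cons
    · exact absurd (hW.nodup_of_isChain hch) hnd
    · rw [map_zero, hLR, sum_range_nodupSingle_eraseIdx_append_cons_cons]
  · exact map_zero _

theorem bdry_fstar_of_isChain (hW : Acyclic adjW) (hf : IsDigraphMap adjV adjW f)
    {u : List V →₀ ℤ} (hu : ∀ l ∈ u.support, l.IsChain adjV) :
    bdry W (fstar f u) = fstar f (bdry V u) := by
  rw [← u.sum_single, map_finsuppSum, map_finsuppSum, map_finsuppSum, map_finsuppSum]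
  refine Finsupp.sum_congr fun l hl => ?_
  rw [← smul_single_one, map_smul, map_smul, map_smul, map_smul,
    bdry_fstar_single_one hW hf (hu l hl)]

theorem IsA.fstar (hf : IsDigraphMap adjV adjW f) {k : ℕ} {u : List V →₀ ℤ}
    (hu : IsA adjV k u) : IsA adjW k (fstar f u) := by
  intro m hm
  obtain ⟨l, hl, rfl, hnd⟩ := mem_support_fstar hm
  obtain ⟨hlen, hch, -⟩ := hu l hl
  exact ⟨by rw [List.length_map, hlen], (hf.isChain_map hch).of_or_eq_of_nodup hnd, hnd⟩

end PathComplex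

/-- If `H` is acyclic and `f : G → H` is a digraph map, then `f_*` restricts to a chain map
`Ω_*(G;ℤ) → Ω_*(H;ℤ)`: for `u ∈ Ω_n(G;ℤ)`, `f_* u ∈ Ω_n(H;ℤ)` and `∂ (f_* u) = f_* (∂ u)`. -/
theorem fstar_chain_map {V W : Type*} (adjV : V → V → Prop) (adjW : W → W → Prop)
    (hW : Acyclic adjW) (f : V → W) (hf : IsDigraphMap adjV adjW f)
    (n : ℕ) (u : List V →₀ ℤ) (hu : IsOmega adjV n u) :
    IsOmega adjW n (fstar f u) ∧ bdry W (fstar f u) = fstar f (bdry V u) := by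
  obtain ⟨hA, hbdryA⟩ := hu
  have hcomm := bdry_fstar_of_isChain hW hf fun l hl => (hA l hl).2.1
  exact ⟨⟨hA.fstar hf, hcomm ▸ hbdryA.fstar hf⟩, hcomm⟩
end

section
/- Let S_k (k ≥ 3) be the digraph with vertices {S, E, 1,…,k} and edges S → i and i → E for i = 1,…,k. Then the real path homology of S_k is H_0(S_k;ℝ) ≅ ℝ and H_n(S_k;ℝ) = 0 for all n ≥ 1. -/
/-- The boundary operator on the free ℝ-vector space generated by elementary paths (encoded as
lists of vertices): `∂ e_{i₀…i_n} = Σ_j (-1)^j e_{i₀…î_j…i_n}` for paths of length ≥ 1, and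
`∂ = 0` on paths of length 0. -/
noncomputable def bdryR (V : Type*) : (List V →₀ ℝ) →ₗ[ℝ] (List V →₀ ℝ) :=
  Finsupp.lsum ℝ fun l => LinearMap.toSpanSingleton ℝ _
    (if 2 ≤ l.length then
      ∑ j ∈ Finset.range l.length, (-1 : ℝ) ^ j • Finsupp.single (l.eraseIdx j) (1 : ℝ)
    else 0)

/-- `u` is an ℝ-linear combination of strongly regular allowed elementary `n`-paths in the
digraph with adjacency `adj`, i.e. `u ∈ A_n(G;ℝ)`. -/
def IsAR {V : Type*} (adj : V → V → Prop) (n : ℕ) (u : List V →₀ ℝ) : Prop :=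
  ∀ l ∈ u.support, l.length = n + 1 ∧ l.Chain' adj ∧ l.Nodup

/-- `u ∈ Ω_n(G;ℝ)`: `u ∈ A_n(G;ℝ)` and `∂u ∈ A_{n-1}(G;ℝ)`. -/
def IsOmegaR {V : Type*} (adj : V → V → Prop) (n : ℕ) (u : List V →₀ ℝ) : Prop :=
  IsAR adj n u ∧ IsAR adj (n - 1) (bdryR V u)

/-- The digraph `S_k`: vertices `S = inl false`, `E = inl true` and `1,…,k` (`inr i`), with
edges `S → i` and `i → E` for every `i`. -/
def skAdj (k : ℕ) : (Bool ⊕ Fin k) → (Bool ⊕ Fin k) → Prop := fun a b =>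
  (a = Sum.inl false ∧ ∃ i, b = Sum.inr i) ∨ ((∃ i, a = Sum.inr i) ∧ b = Sum.inl true)

/-! The allowed paths of `S_k` are its vertices, its edges `S → i` and `i → E`, and the 2-paths
`S → i → E`; there are none longer. Since `S_k` is connected as an undirected graph, every
0-chain is a multiple of `[S]` modulo boundaries, and the augmentation (sum of coefficients),
which kills all boundaries, shows `[S]` is not one. A 1-cycle `Σ aᵢ [S,i] + bᵢ [i,E]` has
`aᵢ = bᵢ` and `Σ aᵢ = 0`; the latter makes the non-allowed faces `[S,E]` of `Σ aᵢ [S,i,E]` cancel,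
so this 2-path lies in `Ω₂` and bounds the cycle. Finally `∂` is injective on `A₂`, as the
faces `[S,i]` of the 2-paths are distinct, so there are no 2-cycles. -/

open Finsupp

section PathChains

variable {V : Type*} {adj : V → V → Prop} {n : ℕ} {u : List V →₀ ℝ}

def allowedPaths (adj : V → V → Prop) (n : ℕ) : Set (List V) :=
  {l | l.length = n + 1 ∧ l.IsChain adj ∧ l.Nodup}

noncomputable def arSubmodule (adj : V → V → Prop) (n : ℕ) : Submodule ℝ (List V →₀ ℝ) :=
  supported ℝ ℝ (allowedPaths adj n)

theorem arSubmodule_eq_span :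
    arSubmodule adj n = Submodule.span ℝ ((fun l => single l 1) '' allowedPaths adj n) :=
  supported_eq_span_single ℝ _

noncomputable def omegaSubmodule (adj : V → V → Prop) (n : ℕ) : Submodule ℝ (List V →₀ ℝ) :=
  arSubmodule adj n ⊓ (arSubmodule adj (n - 1)).comap (bdryR V)

theorem isOmegaR_iff_mem_omegaSubmodule : IsOmegaR adj n u ↔ u ∈ omegaSubmodule adj n := Iff.rfl

theorem bdryR_single (l : List V) (c : ℝ) :
    bdryR V (single l c) = c • if 2 ≤ l.length then
      ∑ j ∈ Finset.range l.length, (-1 : ℝ) ^ j • single (l.eraseIdx j) 1 else 0 := by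
  simp [bdryR]

theorem bdryR_single_singleton (a : V) (c : ℝ) : bdryR V (single [a] c) = 0 := by
  simp [bdryR_single]

theorem bdryR_single_pair (a b : V) (c : ℝ) :
    bdryR V (single [a, b] c) = single [b] c - single [a] c := by
  simp [bdryR_single, Finset.sum_range_succ, sub_eq_add_neg]

theorem bdryR_single_triple (a b d : V) (c : ℝ) :
    bdryR V (single [a, b, d] c) = single [b, d] c - single [a, d] c + single [a, b] c := by
  simp [bdryR_single, Finset.sum_range_succ, pow_succ]
  abel

theorem singleton_mem_allowedPaths (a : V) : [a] ∈ allowedPaths adj 0 := by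
  simp [allowedPaths]

theorem omegaSubmodule_zero : omegaSubmodule adj 0 = arSubmodule adj 0 := by
  refine inf_eq_left.mpr ?_
  rw [arSubmodule_eq_span, Submodule.span_le]
  rintro _ ⟨l, ⟨hlen, -⟩, rfl⟩
  obtain ⟨a, rfl⟩ := List.length_eq_one_iff.mp hlen
  simp [bdryR_single_singleton]

theorem omegaSubmodule_one : omegaSubmodule adj 1 = arSubmodule adj 1 := by
  refine inf_eq_left.mpr ?_
  rw [arSubmodule_eq_span, Submodule.span_le]
  rintro _ ⟨l, ⟨hlen, -⟩, rfl⟩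
  obtain ⟨a, b, rfl⟩ := List.length_eq_two.mp hlen
  simp only [SetLike.mem_coe, Submodule.mem_comap, bdryR_single_pair]
  exact sub_mem (single_mem_supported ℝ _ (singleton_mem_allowedPaths b))
    (single_mem_supported ℝ _ (singleton_mem_allowedPaths a))

noncomputable def augmentation (V : Type*) : (List V →₀ ℝ) →ₗ[ℝ] ℝ :=
  linearCombination ℝ fun _ => 1

@[simp]
theorem augmentation_single (l : List V) (c : ℝ) : augmentation V (single l c) = c := by
  simp [augmentation]

theorem augmentation_bdryR_eq_zero (hu : u ∈ arSubmodule adj 1) :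
    augmentation V (bdryR V u) = 0 := by
  suffices arSubmodule adj 1 ≤ LinearMap.ker (augmentation V ∘ₗ bdryR V) from this hu
  rw [arSubmodule_eq_span, Submodule.span_le]
  rintro _ ⟨l, ⟨hlen, -⟩, rfl⟩
  obtain ⟨a, b, rfl⟩ := List.length_eq_two.mp hlen
  simp [bdryR_single_pair]

theorem eq_zero_of_smul_single_eq_bdryR {x : V} {c : ℝ} {v : List V →₀ ℝ}
    (hv : v ∈ arSubmodule adj 1) (h : c • single [x] 1 = bdryR V v) : c = 0 := by
  simpa [← h] using augmentation_bdryR_eq_zero hv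

theorem arSubmodule_zero_le_span_sup_map_bdryR (x₀ : V)
    (h : ∀ x, single [x] 1 - single [x₀] 1 ∈ (omegaSubmodule adj 1).map (bdryR V)) :
    arSubmodule adj 0 ≤ (ℝ ∙ single [x₀] 1) ⊔ (omegaSubmodule adj 1).map (bdryR V) := by
  rw [arSubmodule_eq_span, Submodule.span_le]
  rintro _ ⟨l, ⟨hlen, -⟩, rfl⟩
  obtain ⟨x, rfl⟩ := List.length_eq_one_iff.mp hlen
  simp only [SetLike.mem_coe]
  rw [← add_sub_cancel (single [x₀] (1 : ℝ)) (single [x] 1)]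
  exact Submodule.add_mem_sup (Submodule.mem_span_singleton_self _) (h x)

theorem eq_sum_single_of_mem_supported_range {α ι : Type*} [Fintype ι] {f : ι → α}
    (hf : Function.Injective f) {u : α →₀ ℝ} (hu : u ∈ supported ℝ ℝ (Set.range f)) :
    u = ∑ i, single (f i) (u (f i)) := by
  classical
  have hsub : u.support ⊆ Finset.univ.image f := by
    intro l hl
    obtain ⟨i, rfl⟩ := (mem_supported ℝ u).mp hu hl
    exact Finset.mem_image_of_mem f (Finset.mem_univ i)
  conv_lhs => rw [← u.sum_single, sum_of_support_subset u hsub _ (fun _ _ => single_zero _)]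
  exact Finset.sum_image fun i _ j _ hij => hf hij

end PathChains

namespace Sk

variable {k : ℕ}

abbrev S (k : ℕ) : Bool ⊕ Fin k := .inl false
abbrev E (k : ℕ) : Bool ⊕ Fin k := .inl true

def edge : Fin k ⊕ Fin k → List (Bool ⊕ Fin k) :=
  Sum.elim (fun i => [S k, .inr i]) (fun i => [.inr i, E k])

theorem edge_injective : Function.Injective (edge (k := k)) := by
  rintro (i | i) (j | j) h <;> simp_all [edge]

theorem twoPath_injective : Function.Injective fun i : Fin k => [S k, .inr i, E k] := by
  intro i j h
  simpa using h

theorem allowedPaths_one : allowedPaths (skAdj k) 1 = Set.range edge := by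
  ext l
  constructor
  · rintro ⟨hlen, hchain, -⟩
    obtain ⟨a, b, rfl⟩ := List.length_eq_two.mp hlen
    rcases List.isChain_pair.mp hchain with ⟨rfl, i, rfl⟩ | ⟨⟨i, rfl⟩, rfl⟩
    exacts [⟨.inl i, rfl⟩, ⟨.inr i, rfl⟩]
  · rintro ⟨i | i, rfl⟩ <;> simp [allowedPaths, edge, skAdj]

theorem allowedPaths_two :
    allowedPaths (skAdj k) 2 = Set.range fun i : Fin k => [S k, .inr i, E k] := by
  ext l
  constructor
  · rintro ⟨hlen, hchain, -⟩
    match l, hlen with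
    | [a, b, d], _ =>
      simp only [List.isChain_cons_cons, List.isChain_singleton, and_true, skAdj] at hchain
      obtain ⟨⟨rfl, i, rfl⟩ | ⟨-, rfl⟩, h⟩ := hchain <;> simp_all
  · rintro ⟨i, rfl⟩
    simp [allowedPaths, skAdj]

theorem allowedPaths_eq_empty {n : ℕ} (hn : 3 ≤ n) : allowedPaths (skAdj k) n = ∅ := by
  refine Set.eq_empty_of_forall_notMem ?_
  rintro l ⟨hlen, hchain, -⟩
  match l, hn, hlen with
  | a :: b :: d :: e :: _, _, _ =>
    simp only [List.isChain_cons_cons, skAdj] at hchain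
    obtain ⟨hab, ⟨rfl, -⟩ | ⟨-, rfl⟩, hde, -⟩ := hchain <;> simp_all

theorem edge_mem_arSubmodule (e : Fin k ⊕ Fin k) (c : ℝ) :
    single (edge e) c ∈ arSubmodule (skAdj k) 1 :=
  single_mem_supported ℝ c (allowedPaths_one ▸ Set.mem_range_self e)

theorem single_sub_single_S_mem_map_bdryR (hk : 0 < k) (x : Bool ⊕ Fin k) :
    single [x] 1 - single [S k] 1 ∈ (omegaSubmodule (skAdj k) 1).map (bdryR _) := by
  rw [omegaSubmodule_one]
  rcases x with (_ | _) | i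
  · simp
  · let i₀ : Fin k := ⟨0, hk⟩
    refine ⟨single (edge (.inl i₀)) 1 + single (edge (.inr i₀)) 1,
      add_mem (edge_mem_arSubmodule _ _) (edge_mem_arSubmodule _ _), ?_⟩
    simp [edge, bdryR_single_pair]
  · exact ⟨single (edge (.inl i)) 1, edge_mem_arSubmodule _ _, by simp [edge, bdryR_single_pair]⟩

theorem eq_sum_edge {u : List (Bool ⊕ Fin k) →₀ ℝ} (hu : u ∈ arSubmodule (skAdj k) 1) :
    u = ∑ i, single [S k, .inr i] (u [S k, .inr i])
      + ∑ i, single [.inr i, E k] (u [.inr i, E k]) := by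
  rw [arSubmodule, allowedPaths_one] at hu
  exact (eq_sum_single_of_mem_supported_range edge_injective hu).trans (Fintype.sum_sum_type _)

theorem eq_sum_twoPath {u : List (Bool ⊕ Fin k) →₀ ℝ} (hu : u ∈ arSubmodule (skAdj k) 2) :
    u = ∑ i, single [S k, .inr i, E k] (u [S k, .inr i, E k]) := by
  rw [arSubmodule, allowedPaths_two] at hu
  exact eq_sum_single_of_mem_supported_range twoPath_injective hu

theorem eq_zero_of_bdryR_eq_zero_two {u : List (Bool ⊕ Fin k) →₀ ℝ}
    (hu : u ∈ arSubmodule (skAdj k) 2) (hcycle : bdryR _ u = 0) : u = 0 := by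
  have hcoeff (i : Fin k) : u [S k, .inr i, E k] = 0 := by
    have := congrArg (· [S k, .inr i]) hcycle
    rw [eq_sum_twoPath hu, map_sum] at this
    simpa [bdryR_single_triple, single_apply] using this
  rw [eq_sum_twoPath hu]
  simp [hcoeff]

theorem exists_bdryR_eq_of_bdryR_eq_zero_one {u : List (Bool ⊕ Fin k) →₀ ℝ}
    (hu : u ∈ arSubmodule (skAdj k) 1) (hcycle : bdryR _ u = 0) :
    ∃ v ∈ omegaSubmodule (skAdj k) 2, bdryR _ v = u := by
  set a : Fin k → ℝ := fun i => u [S k, .inr i]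
  set b : Fin k → ℝ := fun i => u [.inr i, E k]
  have hu_eq : u = ∑ i, single [S k, .inr i] (a i) + ∑ i, single [.inr i, E k] (b i) :=
    eq_sum_edge hu
  have hbdry : bdryR _ u = ∑ i, (single [.inr i] (a i) - single [S k] (a i))
      + ∑ i, (single [E k] (b i) - single [.inr i] (b i)) := by
    rw [hu_eq, map_add, map_sum, map_sum]
    simp only [bdryR_single_pair]
  have hab (i : Fin k) : b i = a i := by
    have := congrArg (· [.inr i]) hcycle
    simp [hbdry, single_apply] at this
    linarith
  have hsum : ∑ i, a i = 0 := by
    have := congrArg (· [S k]) hcycle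
    simpa [hbdry, single_apply] using this
  have hbdry_v : bdryR _ (∑ i, single [S k, .inr i, E k] (a i)) = u := by
    simp only [map_sum, bdryR_single_triple, Finset.sum_add_distrib, Finset.sum_sub_distrib,
      ← single_finsetSum, hsum, single_zero, sub_zero]
    rw [hu_eq, add_comm]
    simp only [hab]
  refine ⟨_, ⟨sum_mem fun i _ => single_mem_supported ℝ _ ?_, ?_⟩, hbdry_v⟩
  · exact allowedPaths_two ▸ Set.mem_range_self i
  · exact Submodule.mem_comap.mpr (hbdry_v ▸ hu)

theorem eq_zero_of_bdryR_eq_zero {n : ℕ} {u : List (Bool ⊕ Fin k) →₀ ℝ} (hn : 2 ≤ n)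
    (hu : u ∈ arSubmodule (skAdj k) n) (hcycle : bdryR _ u = 0) : u = 0 := by
  obtain rfl | hn := hn.eq_or_lt
  · exact eq_zero_of_bdryR_eq_zero_two hu hcycle
  · rwa [arSubmodule, allowedPaths_eq_empty hn, supported_empty, Submodule.mem_bot] at hu

end Sk

/-- For `k ≥ 3`, the real path homology of `S_k` is `H₀ ≅ ℝ` (there is a class `u₀` whose
multiples give every 0-cycle modulo boundaries, and which is not a boundary) and `H_n = 0` for
all `n ≥ 1` (every `n`-cycle in `Ω_n` is the boundary of an element of `Ω_{n+1}`). -/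
theorem sk_path_homology (k : ℕ) (hk : 3 ≤ k) :
    (∃ u₀ : List (Bool ⊕ Fin k) →₀ ℝ,
      IsOmegaR (skAdj k) 0 u₀ ∧
      (∀ u, IsOmegaR (skAdj k) 0 u → bdryR _ u = 0 →
        ∃ (c : ℝ) (v : List (Bool ⊕ Fin k) →₀ ℝ),
          IsOmegaR (skAdj k) 1 v ∧ u = c • u₀ + bdryR _ v) ∧
      (∀ (c : ℝ) (v : List (Bool ⊕ Fin k) →₀ ℝ),
        IsOmegaR (skAdj k) 1 v → c • u₀ = bdryR _ v → c = 0)) ∧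
    (∀ n, 1 ≤ n → ∀ u : List (Bool ⊕ Fin k) →₀ ℝ,
      IsOmegaR (skAdj k) n u → bdryR _ u = 0 →
        ∃ v, IsOmegaR (skAdj k) (n + 1) v ∧ bdryR _ v = u) := by
  simp only [isOmegaR_iff_mem_omegaSubmodule]
  refine ⟨⟨single [Sk.S k] 1, ?_, fun u hu _ => ?_, fun c v hv h => ?_⟩,
    fun n hn u hu hcycle => ?_⟩
  · rw [omegaSubmodule_zero]
    exact single_mem_supported ℝ 1 (singleton_mem_allowedPaths _)
  · rw [omegaSubmodule_zero] at hu
    obtain ⟨_, hc, _, ⟨v, hv, rfl⟩, rfl⟩ := Submodule.mem_sup.mp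
      (arSubmodule_zero_le_span_sup_map_bdryR _
        (Sk.single_sub_single_S_mem_map_bdryR (by omega)) hu)
    obtain ⟨c, rfl⟩ := Submodule.mem_span_singleton.mp hc
    exact ⟨c, v, hv, rfl⟩
  · rw [omegaSubmodule_one] at hv
    exact eq_zero_of_smul_single_eq_bdryR hv h
  · obtain rfl | hn := hn.eq_or_lt
    · exact Sk.exists_bdryR_eq_of_bdryR_eq_zero_one (omegaSubmodule_one ▸ hu) hcycle
    · rw [Sk.eq_zero_of_bdryR_eq_zero hn hu.1 hcycle]
      exact ⟨0, zero_mem _, map_zero _⟩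
end
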